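/- Suppose M > k·max_{i,j} Δ(i,j). Then the maximal total score over feasible assignments equals (n_B − k)·M + max{ Σ_{i,j} ĉ_{i,j}·Δ(i,j) : Ĉ a bipartite linkage structure with Σ_{i,j} ĉ_{i,j} = k }. Moreover, for any maximizing feasible assignment f, the matrix Ĉ defined by ĉ_{i,j} = 1 if and only if f(j) = i with i ≤ n_A is a bipartite linkage structure with exactly k links that maximizes Σ_{i,j} ĉ_{i,j}·Δ(i,j) over all bipartite linkage structures with exactly k links; that is, the augmented linear sum assignment problem solves the k-constrained inner maximization. -/

import Mathlib

/-!
Rows `i < nA` of the augmented matrix are genuine, the remaining `nB - k` rows are dummies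
scoring `M`. An injective assignment `f` links column `j` to row `f j` when `f j < nA`, and its
score is `(nB - #links) * M` plus the `Δ`-weight of its links. Injectivity forces at least `k`
links, since only `nB - k` columns fit into dummy rows. At an optimum there are exactly `k`:
otherwise a dummy row is free, and moving a linked column there gains `M - Δ > 0` (here
`M > k Δ ≥ Δ`). Conversely every linkage with `k` links is realised by an injective assignment
that sends its unlinked columns to distinct dummy rows, so comparing scores at equal link count
compares the `Δ`-weights.
-/

/-- Entry of the augmented score matrix: `Δ(i,j)` for the genuine rows `i < nA` and the
large value `M` for the `nB − k` dummy rows `nA ≤ i < nA + nB − k`. -/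
noncomputable def augScore {nA nB k : ℕ} (Δ : Fin nA → Fin nB → ℝ) (M : ℝ)
    (i : Fin (nA + nB - k)) (j : Fin nB) : ℝ :=
  if h : (i : ℕ) < nA then Δ ⟨(i : ℕ), h⟩ j else M

/-- A bipartite linkage structure: a 0/1 matrix whose row sums and column sums are all
at most one. -/
def IsBipartiteLinkage {nA nB : ℕ} (Chat : Fin nA → Fin nB → ℝ) : Prop :=
  (∀ i j, Chat i j = 0 ∨ Chat i j = 1) ∧
  (∀ i, ∑ j, Chat i j ≤ 1) ∧ (∀ j, ∑ i, Chat i j ≤ 1)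

open Finset Function

theorem Fin.card_filter_le_val (m a : ℕ) : #{i : Fin m | a ≤ (i : ℕ)} = m - a := by
  simp only [← not_lt, filter_not, card_sdiff_of_subset (filter_subset _ _), card_univ,
    Fintype.card_fin, Fin.card_filter_val_lt]
  omega

theorem Fin.sum_univ_ite_val_eq {M : Type*} [AddCommMonoid M] {n : ℕ} (c : ℕ) (a : Fin n → M) :
    ∑ i : Fin n, (if c = (i : ℕ) then a i else 0) = if h : c < n then a ⟨c, h⟩ else 0 := by
  split_ifs with h
  · have hc (i : Fin n) : c = (i : ℕ) ↔ i = ⟨c, h⟩ := by rw [Fin.ext_iff, eq_comm]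
    simp_rw [hc]
    simp
  · exact sum_eq_zero fun i _ => if_neg fun (hc : c = i) => h (hc ▸ i.isLt)

theorem exists_mem_forall_ne_of_card_filter_lt {α β : Type*} [Fintype α] [DecidableEq β]
    (f : α → β) {s : Finset β} (h : #{a | f a ∈ s} < #s) : ∃ b ∈ s, ∀ a, f a ≠ b := by
  by_contra! hcov
  have : s ⊆ image f {a | f a ∈ s} := fun b hb => by
    obtain ⟨a, rfl⟩ := hcov b hb
    exact mem_image_of_mem f (by simpa using hb)
  exact (card_le_card this |>.trans card_image_le).not_gt h

theorem Function.Injective.update_of_forall_ne {α β : Type*} [DecidableEq α] {f : α → β}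
    (hf : Injective f) {b : β} (hb : ∀ a, f a ≠ b) (a₀ : α) : Injective (update f a₀ b) := by
  intro a a' h
  by_cases ha : a = a₀ <;> by_cases ha' : a' = a₀
  · rw [ha, ha']
  · subst ha
    rw [update_self, update_of_ne ha'] at h
    exact absurd h.symm (hb a')
  · subst ha'
    rw [update_self, update_of_ne ha] at h
    exact absurd h (hb a)
  · rw [update_of_ne ha, update_of_ne ha'] at h
    exact hf h

theorem sum_update_apply_add {α β : Type*} [Fintype α] [DecidableEq α] (s : β → α → ℝ)
    (f : α → β) (a₀ : α) (b : β) :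
    ∑ a, s (update f a₀ b a) a + s (f a₀) a₀ = ∑ a, s (f a) a + s b a₀ := by
  have hupd : (fun a => s (update f a₀ b a) a) = update (fun a => s (f a) a) a₀ (s b a₀) := by
    ext a
    rcases eq_or_ne a a₀ with rfl | ha <;> simp [*]
  rw [hupd, sum_update_of_mem (mem_univ a₀), ← add_sum_erase _ _ (mem_univ a₀),
    sdiff_singleton_eq_erase]
  ring

def linkMatrix (nA : ℕ) {nB m : ℕ} (f : Fin nB → Fin m) (i : Fin nA) (j : Fin nB) : ℝ :=
  if (f j : ℕ) = i then 1 else 0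

def linkedCols (nA : ℕ) {nB m : ℕ} (f : Fin nB → Fin m) : Finset (Fin nB) :=
  {j | (f j : ℕ) < nA}

section linkMatrix

variable {nA nB m : ℕ} (f : Fin nB → Fin m)

theorem sum_linkMatrix_mul (a : Fin nA → ℝ) (j : Fin nB) :
    ∑ i, linkMatrix nA f i j * a i = if h : (f j : ℕ) < nA then a ⟨f j, h⟩ else 0 := by
  simp only [linkMatrix, ite_mul, one_mul, zero_mul, Fin.sum_univ_ite_val_eq]

theorem sum_linkMatrix : ∑ i, ∑ j, linkMatrix nA f i j = #(linkedCols nA f) := by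
  have hcol (j : Fin nB) : ∑ i, linkMatrix nA f i j = if (f j : ℕ) < nA then 1 else 0 := by
    simpa [dite_eq_ite] using sum_linkMatrix_mul f (fun _ => 1) j
  rw [sum_comm, sum_congr rfl fun j _ => hcol j, sum_boole, linkedCols]

theorem isBipartiteLinkage_linkMatrix (hf : Injective f) :
    IsBipartiteLinkage (linkMatrix nA f) := by
  refine ⟨fun i j => ?_, fun i => ?_, fun j => ?_⟩
  · unfold linkMatrix; split_ifs <;> simp
  · simp only [linkMatrix]
    rw [sum_boole, Nat.cast_le_one, card_le_one]
    simp only [mem_filter, mem_univ, true_and]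
    exact fun a ha b hb => hf (Fin.ext (ha.trans hb.symm))
  · simpa using (sum_linkMatrix_mul f (fun _ => 1) j).le.trans (by split_ifs <;> simp)

theorem card_filter_le_val_eq_sub_card_linkedCols :
    #{j | nA ≤ (f j : ℕ)} = nB - #(linkedCols nA f) := by
  have := card_filter_add_card_filter_not (s := univ) fun j : Fin nB => (f j : ℕ) < nA
  simp only [card_univ, Fintype.card_fin, not_lt] at this
  rw [linkedCols]
  omega

theorem le_card_linkedCols_add (hf : Injective f) : nB ≤ #(linkedCols nA f) + (m - nA) := by
  have : #{j | nA ≤ (f j : ℕ)} ≤ m - nA := by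
    rw [← Fin.card_filter_le_val m nA]
    refine card_le_card_of_injOn f (fun j hj => ?_) hf.injOn
    simpa using hj
  rw [card_filter_le_val_eq_sub_card_linkedCols] at this
  omega

end linkMatrix

theorem eq_of_eq_one_of_sum_le_one {ι : Type*} [Fintype ι] {v : ι → ℝ} (hv : ∀ i, 0 ≤ v i)
    (hsum : ∑ i, v i ≤ 1) {i i' : ι} (hi : v i = 1) (hi' : v i' = 1) : i = i' := by
  classical
  by_contra hne
  have := sum_le_sum_of_subset_of_nonneg (subset_univ {i, i'}) fun x _ _ => hv x
  rw [sum_pair hne, hi, hi'] at this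
  linarith

namespace IsBipartiteLinkage

variable {nA nB : ℕ} {C : Fin nA → Fin nB → ℝ}

theorem nonneg (hC : IsBipartiteLinkage C) (i : Fin nA) (j : Fin nB) : 0 ≤ C i j := by
  rcases hC.1 i j with h | h <;> simp [h]

theorem eq_of_eq_one_left (hC : IsBipartiteLinkage C) {i : Fin nA} {j j' : Fin nB}
    (hj : C i j = 1) (hj' : C i j' = 1) : j = j' :=
  eq_of_eq_one_of_sum_le_one (hC.nonneg i) (hC.2.1 i) hj hj'

theorem eq_of_eq_one_right (hC : IsBipartiteLinkage C) {i i' : Fin nA} {j : Fin nB}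
    (hi : C i j = 1) (hi' : C i' j = 1) : i = i' :=
  eq_of_eq_one_of_sum_le_one (hC.nonneg · j) (hC.2.2 j) hi hi'

theorem eq_zero_of_ne_one (hC : IsBipartiteLinkage C) {i : Fin nA} {j : Fin nB}
    (h : C i j ≠ 1) : C i j = 0 :=
  (hC.1 i j).resolve_right h

theorem sum_col (hC : IsBipartiteLinkage C) (j : Fin nB) :
    ∑ i, C i j = if ∃ i, C i j = 1 then 1 else 0 := by
  split_ifs with h
  · obtain ⟨i₀, hi₀⟩ := h
    refine (sum_eq_single i₀ (fun i _ hi => ?_) (by simp)).trans hi₀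
    exact hC.eq_zero_of_ne_one fun h1 => hi (hC.eq_of_eq_one_right h1 hi₀)
  · exact sum_eq_zero fun i _ => hC.eq_zero_of_ne_one (not_exists.mp h i)

end IsBipartiteLinkage

/-- `hm` says that the `m - nA` dummy rows can absorb the `nB - k` unlinked columns. -/
theorem IsBipartiteLinkage.exists_injective_linkMatrix_eq {nA nB m k : ℕ}
    {C : Fin nA → Fin nB → ℝ} (hC : IsBipartiteLinkage C) (hsum : ∑ i, ∑ j, C i j = k)
    (hm : nA + nB ≤ m + k) :
    ∃ g : Fin nB → Fin m, Injective g ∧ linkMatrix nA g = C := by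
  classical
  set L : Finset (Fin nB) := {j | ∃ i, C i j = 1}
  have hL : #L = k := by
    rw [sum_comm, sum_congr rfl fun j _ => hC.sum_col j, sum_boole] at hsum
    exact_mod_cast hsum
  have hnA : nA ≤ m := by have := card_le_univ L; simp only [Fintype.card_fin] at this; omega
  obtain ⟨e⟩ : Nonempty ({j // j ∉ L} ↪ {r : Fin m // nA ≤ (r : ℕ)}) := by
    refine Function.Embedding.nonempty_of_card_le ?_
    rw [Fintype.card_subtype_compl, Fintype.card_coe, Fintype.card_subtype,
      Fin.card_filter_le_val, Fintype.card_fin, hL]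
    omega
  let g (j : Fin nB) : Fin m :=
    if h : ∃ i, C i j = 1 then Fin.castLE hnA h.choose else e ⟨j, by simpa [L] using h⟩
  have hg_linked {j : Fin nB} (h : ∃ i, C i j = 1) : (g j : ℕ) = h.choose := by simp [g, h]
  have hg_dummy {j : Fin nB} (h : ¬∃ i, C i j = 1) : nA ≤ (g j : ℕ) := by
    simpa [g, h] using (e ⟨j, by simpa [L] using h⟩).2
  refine ⟨g, fun a b hab => ?_, funext₂ fun i j => ?_⟩
  · have hab' : (g a : ℕ) = g b := congrArg Fin.val hab
    by_cases ha : ∃ i, C i a = 1 <;> by_cases hb : ∃ i, C i b = 1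
    · rw [hg_linked ha, hg_linked hb] at hab'
      exact hC.eq_of_eq_one_left ha.choose_spec (Fin.ext hab' ▸ hb.choose_spec)
    · have := hg_dummy hb; rw [hg_linked ha] at hab'; omega
    · have := hg_dummy ha; rw [hg_linked hb] at hab'; omega
    · simp only [g, ha, hb, dite_false] at hab
      simpa using e.injective (Subtype.ext hab)
  · unfold linkMatrix
    by_cases h : ∃ i, C i j = 1
    · rw [hg_linked h]
      split_ifs with hi
      · exact (Fin.ext hi ▸ h.choose_spec).symm
      · refine (hC.eq_zero_of_ne_one fun h1 => hi ?_).symm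
        exact congrArg Fin.val (hC.eq_of_eq_one_right h.choose_spec h1)
    · have := hg_dummy h
      rw [if_neg (by omega), hC.eq_zero_of_ne_one (not_exists.mp h i)]

section augScore

variable {nA nB k : ℕ} {Δ : Fin nA → Fin nB → ℝ} {M : ℝ}

theorem sum_augScore (f : Fin nB → Fin (nA + nB - k)) :
    ∑ j, augScore Δ M (f j) j =
      (nB - #(linkedCols nA f)) * M + ∑ i, ∑ j, linkMatrix nA f i j * Δ i j := by
  have hsplit (j : Fin nB) : augScore Δ M (f j) j =
      (if nA ≤ (f j : ℕ) then M else 0) + ∑ i, linkMatrix nA f i j * Δ i j := by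
    rw [sum_linkMatrix_mul f (Δ · j), augScore]
    split_ifs <;> first | omega | simp
  rw [sum_congr rfl fun j _ => hsplit j, sum_add_distrib, sum_ite, sum_const, sum_const_zero,
    add_zero, nsmul_eq_mul, card_filter_le_val_eq_sub_card_linkedCols,
    Nat.cast_sub ((card_le_univ _).trans_eq (Fintype.card_fin nB)), sum_comm]

/-- At an optimum no dummy row is left free while a column is linked: moving that column to the
free dummy row would trade `Δ i j < M` for `M`. -/
theorem card_linkedCols_eq_of_isMax (hkB : k ≤ nB) (hΔM : ∀ i j, Δ i j < M)
    {f : Fin nB → Fin (nA + nB - k)} (hf : Injective f)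
    (hmax : ∀ g : Fin nB → Fin (nA + nB - k), Injective g →
      ∑ j, augScore Δ M (g j) j ≤ ∑ j, augScore Δ M (f j) j) :
    #(linkedCols nA f) = k := by
  have hge := le_card_linkedCols_add (nA := nA) f hf
  have hdummy : nA + nB - k - nA = nB - k := by omega
  rw [hdummy] at hge
  have hle_nB : #(linkedCols nA f) ≤ nB := (card_le_univ _).trans_eq (Fintype.card_fin nB)
  refine le_antisymm (not_lt.mp fun hlt => ?_) (by omega)
  obtain ⟨d, hd, hfree⟩ := exists_mem_forall_ne_of_card_filter_lt f
    (s := {r : Fin (nA + nB - k) | nA ≤ (r : ℕ)}) (by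
      simp only [mem_filter, mem_univ, true_and, Fin.card_filter_le_val,
        card_filter_le_val_eq_sub_card_linkedCols, hdummy]
      omega)
  obtain ⟨j₀, hj₀⟩ : (linkedCols nA f).Nonempty := card_pos.mp (by omega)
  have hgain : augScore Δ M (f j₀) j₀ < augScore Δ M d j₀ := by
    simp only [linkedCols, mem_filter, mem_univ, true_and] at hj₀
    simp only [mem_filter, mem_univ, true_and] at hd
    simpa [augScore, hj₀, not_lt.mpr hd] using hΔM _ _
  have hupd := sum_update_apply_add (augScore Δ M) f j₀ d
  have hle := hmax _ (hf.update_of_forall_ne hfree j₀)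
  linarith

theorem sum_mul_le_sum_linkMatrix_mul_of_isMax {f : Fin nB → Fin (nA + nB - k)}
    (hlinked : #(linkedCols nA f) = k)
    (hmax : ∀ g : Fin nB → Fin (nA + nB - k), Injective g →
      ∑ j, augScore Δ M (g j) j ≤ ∑ j, augScore Δ M (f j) j)
    {C : Fin nA → Fin nB → ℝ} (hC : IsBipartiteLinkage C) (hsum : ∑ i, ∑ j, C i j = k) :
    ∑ i, ∑ j, C i j * Δ i j ≤ ∑ i, ∑ j, linkMatrix nA f i j * Δ i j := by
  obtain ⟨g, hg, rfl⟩ := hC.exists_injective_linkMatrix_eq (m := nA + nB - k) hsum le_tsub_add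
  have hgk : #(linkedCols nA g) = k := by exact_mod_cast (sum_linkMatrix g).symm.trans hsum
  have hle := hmax g hg
  rw [sum_augScore, sum_augScore, hgk, hlinked] at hle
  linarith

end augScore

/-- Suppose `M > k·max_{i,j} Δ(i,j)` (stated as `M > k·Δ(i,j)` for all
`i, j`, equivalent since `1 ≤ k ≤ min(nA, nB)` makes the index set nonempty).  A total-
score maximizer over injective assignments `f : Fin nB → Fin (nA + nB − k)` exists, and
for any such maximizer `f`, the matrix `Ĉ` with `ĉ_{i,j} = 1` iff `f j = i` with
`i < nA` is a bipartite linkage structure with exactly `k` links maximizing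
`∑_{i,j} ĉ_{i,j}·Δ(i,j)` over all bipartite linkage structures with exactly `k` links,
and the maximal total score equals `(nB − k)·M + ∑_{i,j} ĉ_{i,j}·Δ(i,j)`: the augmented
LSAP solves the `k`-constrained inner maximization. -/
theorem augmented_lsap_solves_k_constrained_inner_maximization
    {nA nB k : ℕ} (hk1 : 1 ≤ k) (hkA : k ≤ nA) (hkB : k ≤ nB)
    (Δ : Fin nA → Fin nB → ℝ) (hΔ : ∀ i j, 0 ≤ Δ i j)
    (M : ℝ) (hM : ∀ i j, (k : ℝ) * Δ i j < M) :
    (∃ f : Fin nB → Fin (nA + nB - k), Function.Injective f ∧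
      ∀ g : Fin nB → Fin (nA + nB - k), Function.Injective g →
        ∑ j, augScore Δ M (g j) j ≤ ∑ j, augScore Δ M (f j) j) ∧
    (∀ f : Fin nB → Fin (nA + nB - k), Function.Injective f →
      (∀ g : Fin nB → Fin (nA + nB - k), Function.Injective g →
        ∑ j, augScore Δ M (g j) j ≤ ∑ j, augScore Δ M (f j) j) →
      IsBipartiteLinkage
        (fun (i : Fin nA) (j : Fin nB) =>
          if ((f j : ℕ) = (i : ℕ)) then (1 : ℝ) else 0) ∧
      (∑ i : Fin nA, ∑ j : Fin nB, (if ((f j : ℕ) = (i : ℕ)) then (1 : ℝ) else 0)) = (k : ℝ) ∧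
      (∀ C' : Fin nA → Fin nB → ℝ, IsBipartiteLinkage C' →
        (∑ i, ∑ j, C' i j) = (k : ℝ) →
        ∑ i, ∑ j, C' i j * Δ i j ≤
          ∑ i : Fin nA, ∑ j : Fin nB, (if ((f j : ℕ) = (i : ℕ)) then (1 : ℝ) else 0) * Δ i j) ∧
      (∑ j, augScore Δ M (f j) j) =
        ((nB : ℝ) - (k : ℝ)) * M +
          ∑ i : Fin nA, ∑ j : Fin nB, (if ((f j : ℕ) = (i : ℕ)) then (1 : ℝ) else 0) * Δ i j) := by
  have hΔM (i j) : Δ i j < M :=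
    lt_of_le_of_lt (le_mul_of_one_le_left (hΔ i j) (by exact_mod_cast hk1)) (hM i j)
  refine ⟨?_, fun f hf hmax => ?_⟩
  · have : Nonempty (Fin nB ↪ Fin (nA + nB - k)) := ⟨Fin.castLEEmb (by omega)⟩
    obtain ⟨e, he⟩ := Finite.exists_max fun e : Fin nB ↪ Fin (nA + nB - k) =>
      ∑ j, augScore Δ M (e j) j
    exact ⟨e, e.injective, fun g hg => he ⟨g, hg⟩⟩
  have hlinked := card_linkedCols_eq_of_isMax hkB hΔM hf hmax
  refine ⟨isBipartiteLinkage_linkMatrix f hf,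
    (sum_linkMatrix f).trans (by exact_mod_cast hlinked),
    fun C hC hsum => sum_mul_le_sum_linkMatrix_mul_of_isMax hlinked hmax hC hsum, ?_⟩
  rw [sum_augScore, hlinked]
  rfl
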